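/- Let f(v) = 1/∏_{i=1}^{n}(c_i v² + r_i + iη) with n ≥ 2, c_i > 0, r_i ∈ ℝ, η > 0 (so f has no poles in the closed fourth quadrant and decays like |v|^{-2n}). Then ∫_0^∞ v f(v) dv = -∫_0^∞ v f(-i v') dv' after rotating the contour clockwise through the fourth quadrant; equivalently, ∫_0^∞ v f(v) dv = -∫_0^∞ w f evaluated with v² replaced by -w², i.e. ∫_0^∞ v/∏(c_i v² + r_i + iη) dv = -∫_0^∞ w/∏(-c_i w² + r_i + iη) dw. -/

import Mathlib

/-!
Substituting `u = v²` turns the left side into `½ ∫₀^∞ F` and the integral on the right into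
`½ ∫_{-∞}^0 F`, where `F u = 1 / ∏ᵢ (cᵢ u + rᵢ + iη)`; the quarter-turn `v ↦ -iv` of the
`v`-plane becomes `u ↦ -u`. So the claim is `∫_ℝ F = 0`. The poles `-(rᵢ + iη)/cᵢ` of `F` lie in
the open lower half-plane and `F = O(|u|⁻ⁿ)` with `n ≥ 2`, so closing `[-R, R]` by a square in the
upper half-plane gives `∫_{-R}^R F = O(1/R)`.
-/

open MeasureTheory Set Complex Finset Filter Asymptotics

variable {E : Type*} [NormedAddCommGroup E]

lemma inv_sq_isBigO_inv_one_add_sq :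
    (fun x : ℝ => (x ^ 2)⁻¹) =O[cocompact ℝ] fun x => (1 + x ^ 2)⁻¹ := by
  refine IsBigO.of_bound 2 ?_
  filter_upwards [tendsto_norm_cocompact_atTop.eventually_ge_atTop 1] with x hx
  have hx2 : 1 ≤ x ^ 2 := by simpa using one_le_pow₀ (n := 2) hx
  rw [norm_inv, norm_inv, Real.norm_of_nonneg (by positivity),
    Real.norm_of_nonneg (by positivity), ← div_eq_mul_inv, ← one_div,
    div_le_div_iff₀ (by positivity) (by positivity)]
  linarith

lemma integrable_of_continuous_of_norm_le_div_sq {g : ℝ → E} (hg : Continuous g) {C R₀ : ℝ}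
    (hdecay : ∀ x, R₀ ≤ |x| → ‖g x‖ ≤ C / x ^ 2) : Integrable g := by
  refine hg.locallyIntegrable.integrable_of_isBigO_cocompact
    ((IsBigO.of_bound C ?_).trans inv_sq_isBigO_inv_one_add_sq)
    (integrable_inv_one_add_sq.integrableAtFilter _)
  filter_upwards [tendsto_norm_cocompact_atTop.eventually_ge_atTop R₀] with x hx
  rw [norm_inv, Real.norm_of_nonneg (by positivity), ← div_eq_mul_inv]
  exact hdecay x hx

lemma integral_Ioi_smul_comp_sq [NormedSpace ℝ E] (g : ℝ → E) :
    ∫ v in Ioi (0 : ℝ), v • g (v ^ 2) = (2 : ℝ)⁻¹ • ∫ u in Ioi (0 : ℝ), g u := by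
  rw [← integral_comp_rpow_Ioi_of_pos (g := g) two_pos, ← integral_smul]
  refine setIntegral_congr_fun measurableSet_Ioi fun v _ => ?_
  norm_num [Real.rpow_two, smul_smul, ← mul_assoc]

lemma integral_Ioi_add_integral_Ioi_comp_neg [NormedSpace ℝ E] {g : ℝ → E}
    (hg : Integrable g) :
    (∫ u in Ioi (0 : ℝ), g u) + ∫ u in Ioi (0 : ℝ), g (-u) = ∫ u, g u := by
  rw [integral_comp_neg_Ioi, neg_zero, add_comm,
    intervalIntegral.integral_Iic_add_Ioi hg.integrableOn hg.integrableOn]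

section UpperHalfPlane

variable {f : ℂ → E} {C R₀ : ℝ}

lemma norm_le_div_sq_of_le_norm
    (hdecay : ∀ z : ℂ, 0 ≤ z.im → R₀ ≤ ‖z‖ → ‖f z‖ ≤ C / ‖z‖ ^ 2)
    {R : ℝ} (hR₀ : R₀ ≤ R) (hR : 0 < R) :
    ∀ z : ℂ, 0 ≤ z.im → R ≤ ‖z‖ → ‖f z‖ ≤ C / R ^ 2 := by
  intro z hz hRz
  have hfz := hdecay z hz (hR₀.trans hRz)
  have hC : 0 ≤ C := by
    simpa using (le_div_iff₀ (pow_pos (hR.trans_le hRz) 2)).1 ((norm_nonneg _).trans hfz)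
  exact hfz.trans (div_le_div_of_nonneg_left hC (by positivity) (by gcongr))

lemma integrable_comp_ofReal_of_norm_le_div_sq (hf : ContinuousOn f {z | 0 ≤ z.im})
    (hdecay : ∀ z : ℂ, 0 ≤ z.im → R₀ ≤ ‖z‖ → ‖f z‖ ≤ C / ‖z‖ ^ 2) :
    Integrable fun x : ℝ => f x :=
  integrable_of_continuous_of_norm_le_div_sq
    (hf.comp_continuous continuous_ofReal fun x => by simp)
    fun x hx => by simpa using hdecay x (by simp) (by simpa using hx)

variable [NormedSpace ℂ E]

lemma norm_intervalIntegral_le_of_differentiableOn_upper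
    (hd : DifferentiableOn ℂ f {z | 0 ≤ z.im})
    (hdecay : ∀ z : ℂ, 0 ≤ z.im → R₀ ≤ ‖z‖ → ‖f z‖ ≤ C / ‖z‖ ^ 2)
    {R : ℝ} (hR₀ : R₀ ≤ R) (hR : 0 < R) :
    ‖∫ x in (-R)..R, f x‖ ≤ 4 * C / R := by
  have hrect := integral_boundary_rect_eq_zero_of_differentiableOn f (-R : ℂ) (R + R * I)
    (hd.mono fun z hz => by simpa [hR.le] using ((mem_reProdIm.1 hz).2).1)
  simp only [neg_re, neg_im, ofReal_re, ofReal_im, add_re, add_im, mul_re, mul_im, I_re, I_im,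
    mul_zero, mul_one, sub_zero, zero_add, add_zero, neg_zero, zero_mul, ofReal_zero,
    ofReal_neg] at hrect
  have hbound := norm_le_div_sq_of_le_norm hdecay hR₀ hR
  have htop : ‖∫ x in (-R)..R, f (x + R * I)‖ ≤ C / R ^ 2 * (2 * R) := by
    refine (intervalIntegral.norm_integral_le_of_norm_le_const fun x _ =>
      hbound _ (by simp [hR.le]) ?_).trans_eq ?_
    · simpa [abs_of_pos hR] using abs_im_le_norm ((x : ℂ) + R * I)
    · rw [sub_neg_eq_add, abs_of_pos (by positivity)]; ring
  have hside : ∀ s : ℝ, |s| = R → ‖∫ y in (0 : ℝ)..R, f (s + y * I)‖ ≤ C / R ^ 2 * R := by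
    intro s hs
    refine (intervalIntegral.norm_integral_le_of_norm_le_const fun y hy =>
      hbound _ ?_ ?_).trans_eq (by rw [sub_zero, abs_of_pos hR])
    · simpa using (uIoc_of_le hR.le ▸ hy).1.le
    · simpa [hs] using abs_re_le_norm ((s : ℂ) + y * I)
  have hsplit : (∫ x in (-R)..R, f x) = (∫ x in (-R)..R, f (x + R * I))
      - I • (∫ y in (0 : ℝ)..R, f (R + y * I)) + I • ∫ y in (0 : ℝ)..R, f (-R + y * I) := by
    rw [← sub_eq_zero, ← hrect]; abel
  calc ‖∫ x in (-R)..R, f x‖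
      ≤ C / R ^ 2 * (2 * R) + C / R ^ 2 * R + C / R ^ 2 * R := by
        rw [hsplit]
        refine (norm_add_le _ _).trans
          (add_le_add ((norm_sub_le _ _).trans (add_le_add htop ?_)) ?_)
        · simpa [norm_smul] using hside R (abs_of_pos hR)
        · simpa [norm_smul] using hside (-R) (by simp [abs_of_pos hR])
    _ = 4 * C / R := by field_simp; ring

theorem integral_eq_zero_of_differentiableOn_upper
    (hd : DifferentiableOn ℂ f {z | 0 ≤ z.im})
    (hdecay : ∀ z : ℂ, 0 ≤ z.im → R₀ ≤ ‖z‖ → ‖f z‖ ≤ C / ‖z‖ ^ 2) :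
    ∫ x : ℝ, f x = 0 := by
  refine tendsto_nhds_unique (intervalIntegral_tendsto_integral
    (integrable_comp_ofReal_of_norm_le_div_sq hd.continuousOn hdecay)
    tendsto_neg_atTop_atBot tendsto_id) ?_
  refine squeeze_zero_norm' ?_ ((tendsto_const_nhds (x := 4 * C)).div_atTop tendsto_id)
  filter_upwards [eventually_ge_atTop R₀, eventually_gt_atTop 0] with R hR₀ hR
  exact norm_intervalIntegral_le_of_differentiableOn_upper hd hdecay hR₀ hR

end UpperHalfPlane

section LinearFactors

variable {ι : Type*} [Fintype ι] {c : ι → ℝ} {a : ι → ℂ}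

lemma half_mul_norm_le_norm_ofReal_mul_add {c : ℝ} (hc : 0 < c) {a z : ℂ}
    (h : 2 * ‖a‖ ≤ c * ‖z‖) : c / 2 * ‖z‖ ≤ ‖(c : ℂ) * z + a‖ := by
  have := norm_sub_le ((c : ℂ) * z + a) a
  rw [add_sub_cancel_right, norm_mul, norm_real, Real.norm_of_nonneg hc.le] at this
  linarith

lemma exists_norm_inv_prod_le_div_sq (hι : 2 ≤ Fintype.card ι) (hc : ∀ i, 0 < c i)
    (a : ι → ℂ) :
    ∃ C R₀ : ℝ, ∀ z : ℂ, R₀ ≤ ‖z‖ → ‖(∏ i, ((c i : ℂ) * z + a i))⁻¹‖ ≤ C / ‖z‖ ^ 2 := by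
  refine ⟨(∏ i, c i / 2)⁻¹, 1 + ∑ i, 2 * ‖a i‖ / c i, fun z hz => ?_⟩
  have hsum : ∀ i, 2 * ‖a i‖ / c i ≤ ∑ j, 2 * ‖a j‖ / c j := fun i =>
    single_le_sum (f := fun j => 2 * ‖a j‖ / c j) (fun j _ => by have := hc j; positivity)
      (mem_univ i)
  have hz1 : 1 ≤ ‖z‖ := by
    have : 0 ≤ ∑ j, 2 * ‖a j‖ / c j := sum_nonneg fun j _ => by have := hc j; positivity
    linarith
  have hfactor : ∀ i, c i / 2 * ‖z‖ ≤ ‖(c i : ℂ) * z + a i‖ := fun i =>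
    half_mul_norm_le_norm_ofReal_mul_add (hc i) <| by
      have := hsum i
      rw [div_le_iff₀ (hc i)] at this
      nlinarith [hc i]
  have hprod : (∏ i, c i / 2) * ‖z‖ ^ 2 ≤ ∏ i, ‖(c i : ℂ) * z + a i‖ :=
    calc (∏ i, c i / 2) * ‖z‖ ^ 2
        ≤ (∏ i, c i / 2) * ‖z‖ ^ Fintype.card ι := by
          gcongr
          exact prod_nonneg fun i _ => (div_pos (hc i) two_pos).le
      _ = ∏ i, (c i / 2 * ‖z‖) := by rw [prod_mul_distrib, prod_const, card_univ]
      _ ≤ ∏ i, ‖(c i : ℂ) * z + a i‖ :=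
          prod_le_prod (fun i _ => by have := hc i; positivity) fun i _ => hfactor i
  have hpos : 0 < (∏ i, c i / 2) * ‖z‖ ^ 2 :=
    mul_pos (prod_pos fun i _ => div_pos (hc i) two_pos) (by positivity)
  rw [norm_inv, norm_prod, div_eq_mul_inv, ← mul_inv]
  exact inv_anti₀ hpos hprod

lemma differentiableOn_inv_prod_ofReal_mul_add (hc : ∀ i, 0 ≤ c i) (ha : ∀ i, 0 < (a i).im) :
    DifferentiableOn ℂ (fun z => (∏ i, ((c i : ℂ) * z + a i))⁻¹) {z | 0 ≤ z.im} := by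
  refine DifferentiableOn.inv (DifferentiableOn.fun_finsetProd fun i _ => by fun_prop)
    fun z hz => prod_ne_zero_iff.2 fun i _ h => ?_
  have him := congrArg im h
  simp only [add_im, mul_im, ofReal_re, ofReal_im, zero_mul, add_zero, zero_im] at him
  nlinarith [mul_nonneg (hc i) (show 0 ≤ z.im from hz), ha i]

end LinearFactors

/-- Rotating the contour clockwise through the fourth quadrant: for
`f(v) = 1/∏ᵢ (cᵢ v² + rᵢ + iη)` with `n ≥ 2`, `cᵢ > 0`, `rᵢ ∈ ℝ`, `η > 0`
(so `f` has no poles in the closed fourth quadrant and decays like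
`|v|^{-2n}`), one has
`∫₀^∞ v/∏(cᵢ v² + rᵢ + iη) dv = -∫₀^∞ w/∏(-cᵢ w² + rᵢ + iη) dw`. -/
theorem contour_rotation_fourth_quadrant
    (n : ℕ) (hn : 2 ≤ n) (c r : Fin n → ℝ) (hc : ∀ i, 0 < c i)
    (η : ℝ) (hη : 0 < η) :
    ∫ v in Ioi (0 : ℝ),
        (v : ℂ) / ∏ i, ((c i : ℂ) * (v : ℂ) ^ 2 + r i + η * I)
      = -∫ w in Ioi (0 : ℝ),
          (w : ℂ) / ∏ i, (-(c i : ℂ) * (w : ℂ) ^ 2 + r i + η * I) := by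
  set F : ℂ → ℂ := fun u => (∏ i, ((c i : ℂ) * u + (r i + η * I)))⁻¹
  obtain ⟨C, R₀, hdecay⟩ :=
    exists_norm_inv_prod_le_div_sq (by simpa using hn) hc fun i => (r i : ℂ) + η * I
  have hd : DifferentiableOn ℂ F {z | 0 ≤ z.im} :=
    differentiableOn_inv_prod_ofReal_mul_add (fun i => (hc i).le) fun i => by simpa using hη
  have hsplit := integral_Ioi_add_integral_Ioi_comp_neg
    (integrable_comp_ofReal_of_norm_le_div_sq hd.continuousOn fun z _ => hdecay z)
  rw [integral_eq_zero_of_differentiableOn_upper hd fun z _ => hdecay z] at hsplit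
  have hpos : ∫ v in Ioi (0 : ℝ), (v : ℂ) / ∏ i, ((c i : ℂ) * (v : ℂ) ^ 2 + r i + η * I)
      = (2 : ℝ)⁻¹ • ∫ u in Ioi (0 : ℝ), F u := by
    rw [← integral_Ioi_smul_comp_sq]
    refine setIntegral_congr_fun measurableSet_Ioi fun v _ => ?_
    simp [F, div_eq_mul_inv, add_assoc]
  have hneg : ∫ w in Ioi (0 : ℝ), (w : ℂ) / ∏ i, (-(c i : ℂ) * (w : ℂ) ^ 2 + r i + η * I)
      = (2 : ℝ)⁻¹ • ∫ u in Ioi (0 : ℝ), F (-u : ℝ) := by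
    rw [← integral_Ioi_smul_comp_sq fun u => F (-u : ℝ)]
    refine setIntegral_congr_fun measurableSet_Ioi fun v _ => ?_
    simp [F, div_eq_mul_inv, add_assoc]
  rw [hpos, hneg, eq_neg_of_add_eq_zero_left hsplit, smul_neg]
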